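/- For every 1 < β < 2, the random walk (Y_n^β) on ℤ is transient; that is, almost surely lim_{n→∞} |Y_n^β| = ∞. -/

import Mathlib

open Filter MeasureTheory Metric Set Topology

namespace SchmelingStratmann

/-- The (real) Riemann zeta function `ζ(s) = Σ_{n ≥ 1} n^(-s)`. -/
noncomputable def zeta (s : ℝ) : ℝ := ∑' n : ℕ, ((n : ℝ) + 1) ^ (-s)

/-- The constant `c = (2ζ(2))⁻¹ = 3/π²`. -/
noncomputable def c : ℝ := (2 * zeta 2)⁻¹

/-- The partial sum `Σ_{i=1}^{j} i⁻²`. -/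
noncomputable def S (j : ℕ) : ℝ := ∑ i ∈ Finset.range j, (((i : ℝ) + 1) ^ 2)⁻¹

/-- Given the (left endpoint, length) data `a` of a fundamental interval whose word has
last index `k` (the empty word having last index `0`), this is the (left endpoint, length)
data of its child indexed by `m`: the children with `m > k` are placed mutually adjacent
starting from the left endpoint in increasing order of `m`, while for `k ≠ 0` the children
with `m = k, k-1, …, 0` are placed mutually adjacent starting from the right endpoint; the
child `m ≠ k` has length `c ⬝ len ⬝ |m - k|⁻²` and the child `m = k ≠ 0` has length
`c ⬝ len ⬝ (2k)⁻²`. -/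
noncomputable def child (a : ℝ × ℝ) (k m : ℕ) : ℝ × ℝ :=
  if k < m then
    (a.1 + c * a.2 * S (m - k - 1), c * a.2 * (((m : ℝ) - (k : ℝ)) ^ 2)⁻¹)
  else if m < k then
    (a.1 + a.2 - c * a.2 * (((2 * (k : ℝ)) ^ 2)⁻¹ + S (k - m)),
      c * a.2 * (((k : ℝ) - (m : ℝ)) ^ 2)⁻¹)
  else
    (a.1 + a.2 - c * a.2 * ((2 * (k : ℝ)) ^ 2)⁻¹, c * a.2 * ((2 * (k : ℝ)) ^ 2)⁻¹)

noncomputable def buildAux : ℕ → ℝ × ℝ → List ℕ → ℝ × ℝ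
  | _, a, [] => a
  | k, a, m :: w => buildAux m (child a k m) w

/-- The (left endpoint, length) data of the fundamental interval of the word `w`,
starting from `I_∅ = [0,1)`. -/
noncomputable def intData (w : List ℕ) : ℝ × ℝ := buildAux 0 (0, 1) w

/-- The fundamental half-open interval `I_{k₁⋯k_n}` of the word `w = [k₁, …, k_n]`. -/
noncomputable def I (w : List ℕ) : Set ℝ :=
  Set.Ico (intData w).1 ((intData w).1 + (intData w).2)

/-- The diameter (length) `|I_{k₁⋯k_n}|` of a fundamental interval. -/
noncomputable def len (w : List ℕ) : ℝ := (intData w).2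

/-- A finite word `[k₁, …, k_n]` is admissible if `k₁ ≠ 0` and `kᵢ = 0` implies
`k_{i+1} ≠ 0` (with the convention `k₀ = 0`). -/
def Adm (w : List ℕ) : Prop := List.Chain (fun a b => a = 0 → b ≠ 0) 0 w

/-- Admissibility of an infinite sequence (0-based: `k 0` is `k₁`). -/
def AdmSeq (k : ℕ → ℕ) : Prop := k 0 ≠ 0 ∧ ∀ i, k i = 0 → k (i + 1) ≠ 0

/-- The length-`n` prefix `[k₁, …, k_n]` of an infinite sequence. -/
def pref (k : ℕ → ℕ) (n : ℕ) : List ℕ := (List.range n).map k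

/-- The Cantor-like set `C = ⋂_{n ≥ 1} ⋃_{I ∈ C_n} I`. -/
noncomputable def Cset : Set ℝ :=
  ⋂ n : ℕ, ⋃ w ∈ {w : List ℕ | Adm w ∧ w.length = n + 1}, I w

/-- The set `C_∞` of dissipative points: points `ρ(k₁,k₂,…) = ⋂_n cl(I_{k₁⋯k_n})` for
admissible sequences with `k_n → ∞`. -/
noncomputable def Cinf : Set ℝ :=
  {x | ∃ k : ℕ → ℕ, AdmSeq k ∧ Tendsto k atTop atTop ∧
    ∀ n, x ∈ closure (I (pref k n))}

/-- The set `C_∞^γ` of dissipative points whose coding satisfies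
`limsup_n |k_{n+1} - k_n| / n^γ ≤ 1`. -/
noncomputable def CinfGamma (γ : ℝ) : Set ℝ :=
  {x | ∃ k : ℕ → ℕ, AdmSeq k ∧ Tendsto k atTop atTop ∧
    limsup (fun n : ℕ => |((k (n + 1) : ℝ)) - (k n : ℝ)| / ((n + 1 : ℝ)) ^ γ) atTop ≤ 1 ∧
    ∀ n, x ∈ closure (I (pref k n))}

/-- The transition weights `p_α(k, m)` on `ℕ₀`. -/
noncomputable def p (α : ℝ) (k m : ℕ) : ℝ :=
  if m = k then (if k = 0 then 0 else (2 * zeta (2 * α))⁻¹ * (2 * (k : ℝ)) ^ (-(2 * α)))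
  else if m = 0 then (2 * zeta (2 * α))⁻¹ * (k : ℝ) ^ (-(2 * α))
  else (2 * zeta (2 * α))⁻¹ *
    (|(m : ℝ) - (k : ℝ)| ^ (-(2 * α)) + ((m : ℝ) + (k : ℝ)) ^ (-(2 * α)))

noncomputable def muAux (α : ℝ) : ℕ → List ℕ → ℝ
  | _, [] => 1
  | k, m :: w => p α k m * muAux α m w

/-- The set function `μ_α` on fundamental intervals:
`μ_α(I_{k₁⋯k_n}) = Π_{i=0}^{n-1} p_α(k_i, k_{i+1})` with `k₀ = 0`. -/
noncomputable def mu (α : ℝ) (w : List ℕ) : ℝ := muAux α 0 w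

/-- The increment distribution of the Cauchy-type random walk:
`P(increment = l) = (2ζ(β))⁻¹ |l|^(-β)` for `l ≠ 0`. -/
noncomputable def q (β : ℝ) (l : ℤ) : ℝ :=
  if l = 0 then 0 else (2 * zeta β)⁻¹ * |(l : ℝ)| ^ (-β)

/-!
For symmetric `q` the characteristic function of a step is the real function
`φ(t) = ∑ q(l) cos (l t)`, and Fourier inversion on `[-π, π]` gives `P(Y_n = x) ≤ (2π)⁻¹ ∫ |φ|ⁿ`.
Summing the geometric series, the expected number of visits to `x` is at most
`(2π)⁻¹ ∫ (1 - |φ|)⁻¹`. The heavy tail `q(l) ≍ |l|^(-β)` forces `1 - φ(t) ≳ |t|^(β-1)`, while the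
steps `±1, ±2` keep `1 + φ` away from `0`; so `(1 - |φ|)⁻¹ ≲ |t|^(1-β)`, which is integrable
because `β < 2`. By Borel–Cantelli every site is then visited only finitely often almost surely.
-/

open Real
open scoped ENNReal

section StepLaw

variable {f : ℤ → ℝ}

noncomputable def cosSeries (f : ℤ → ℝ) (t : ℝ) : ℝ := ∑' l : ℤ, f l * cos (l * t)

lemma summable_mul_of_abs_le_one (hf : Summable f) {g : ℤ → ℝ} (hg : ∀ l, |g l| ≤ 1) :
    Summable fun l => f l * g l :=
  hf.abs.of_norm_bounded fun l => by
    simpa [abs_mul] using mul_le_of_le_one_right (abs_nonneg (f l)) (hg l)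

lemma tsum_mul_le_one (hf0 : ∀ l, 0 ≤ f l) (hf : HasSum f 1) {g : ℤ → ℝ}
    (hg : ∀ l, |g l| ≤ 1) : ∑' l, f l * g l ≤ 1 :=
  hf.tsum_eq ▸ (summable_mul_of_abs_le_one hf.summable hg).tsum_le_tsum
    (fun l => mul_le_of_le_one_right (hf0 l) (abs_le.1 (hg l)).2) hf.summable

lemma abs_cosSeries_le_one (hf0 : ∀ l, 0 ≤ f l) (hf : HasSum f 1) (t : ℝ) :
    |cosSeries f t| ≤ 1 := by
  rw [abs_le, cosSeries]
  constructor
  · have := tsum_mul_le_one hf0 hf (g := fun l => -cos (l * t)) fun l => by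
      simpa using abs_cos_le_one _
    rw [neg_le, ← tsum_neg]
    simpa using this
  · exact tsum_mul_le_one hf0 hf fun l => abs_cos_le_one _

lemma continuous_cosSeries (hf : Summable f) : Continuous (cosSeries f) :=
  continuous_tsum (fun l => by fun_prop) hf.abs fun l t => by
    simpa [abs_mul] using mul_le_of_le_one_right (abs_nonneg (f l)) (abs_cos_le_one _)

lemma cosSeries_neg (t : ℝ) : cosSeries f (-t) = cosSeries f t := by
  simp [cosSeries]

lemma tsum_mul_sin_eq_zero (hsymm : ∀ l, f (-l) = f l) (t : ℝ) :
    ∑' l : ℤ, f l * sin (l * t) = 0 := by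
  have h := (Equiv.neg ℤ).tsum_eq fun l => f l * sin (l * t)
  simp only [Equiv.neg_apply, hsymm, Int.cast_neg, neg_mul, sin_neg, mul_neg, tsum_neg] at h
  linarith

lemma hasSum_mul_cos_sub (hf : Summable f) (hsymm : ∀ l, f (-l) = f l) (x t : ℝ) :
    HasSum (fun l : ℤ => f l * cos ((x - l) * t)) (cosSeries f t * cos (x * t)) := by
  have hcos : HasSum (fun l : ℤ => f l * cos (l * t)) (cosSeries f t) :=
    (summable_mul_of_abs_le_one hf fun l => abs_cos_le_one (l * t)).hasSum
  have hsin := (summable_mul_of_abs_le_one hf fun l => abs_sin_le_one (l * t)).hasSum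
  rw [tsum_mul_sin_eq_zero hsymm] at hsin
  have e : (fun l : ℤ => f l * cos ((x - l) * t)) =
      fun l => cos (x * t) * (f l * cos (l * t)) + sin (x * t) * (f l * sin (l * t)) := by
    ext l
    rw [sub_mul, cos_sub]
    ring
  rw [e, mul_comm (cosSeries f t)]
  simpa using (hcos.mul_left (cos (x * t))).add (hsin.mul_left (sin (x * t)))

lemma hasSum_mul_one_sub_cos (hf : HasSum f 1) (t : ℝ) :
    HasSum (fun l => f l * (1 - cos (l * t))) (1 - cosSeries f t) := by
  simpa [mul_sub, cosSeries] using hf.sub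
    (summable_mul_of_abs_le_one hf.summable fun l => abs_cos_le_one (l * t)).hasSum

lemma hasSum_mul_one_add_cos (hf : HasSum f 1) (t : ℝ) :
    HasSum (fun l => f l * (1 + cos (l * t))) (1 + cosSeries f t) := by
  simpa [mul_add, cosSeries] using hf.add
    (summable_mul_of_abs_le_one hf.summable fun l => abs_cos_le_one (l * t)).hasSum

end StepLaw

section ConvPow

variable {f : ℤ → ℝ}

noncomputable def convPow (f : ℤ → ℝ) : ℕ → ℤ → ℝ
  | 0, x => if x = 0 then 1 else 0
  | n + 1, x => ∑' l, f l * convPow f n (x - l)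

lemma convPow_mem_Icc (hf0 : ∀ l, 0 ≤ f l) (hf : HasSum f 1) (n : ℕ) (x : ℤ) :
    convPow f n x ∈ Icc 0 1 := by
  induction n generalizing x with
  | zero => unfold convPow; split_ifs <;> norm_num
  | succ n ih =>
    refine ⟨tsum_nonneg fun l => mul_nonneg (hf0 l) (ih _).1, tsum_mul_le_one hf0 hf fun l => ?_⟩
    exact abs_le.2 ⟨by linarith [(ih (x - l)).1], (ih _).2⟩

lemma hasSum_convPow_succ (hf0 : ∀ l, 0 ≤ f l) (hf : HasSum f 1) (n : ℕ) (x : ℤ) :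
    HasSum (fun l => f l * convPow f n (x - l)) (convPow f (n + 1) x) :=
  (summable_mul_of_abs_le_one hf.summable fun l =>
    abs_le.2 ⟨by linarith [(convPow_mem_Icc hf0 hf n (x - l)).1],
      (convPow_mem_Icc hf0 hf n (x - l)).2⟩).hasSum

lemma integral_cos_intCast_mul (x : ℤ) :
    ∫ t in -π..π, cos (x * t) = if x = 0 then 2 * π else 0 := by
  split_ifs with hx
  · simp [hx]; ring
  · have hx' : (x : ℝ) ≠ 0 := Int.cast_ne_zero.2 hx
    rw [intervalIntegral.integral_comp_mul_left (fun t => cos t) hx', integral_cos, mul_neg,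
      sin_neg, sin_int_mul_pi]
    simp

lemma convPow_eq_integral (hf0 : ∀ l, 0 ≤ f l) (hf : HasSum f 1) (hsymm : ∀ l, f (-l) = f l)
    (n : ℕ) (x : ℤ) :
    convPow f n x = (2 * π)⁻¹ * ∫ t in -π..π, cosSeries f t ^ n * cos (x * t) := by
  induction n generalizing x with
  | zero =>
    simp only [convPow, pow_zero, one_mul, integral_cos_intCast_mul]
    split_ifs
    · field_simp
    · simp
  | succ n ih =>
    have hcont : ∀ l : ℤ, Continuous fun t => f l * (cosSeries f t ^ n * cos (↑(x - l) * t)) :=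
      fun l => by have := continuous_cosSeries hf.summable; fun_prop
    have hint : HasSum (fun l => ∫ t in -π..π, f l * (cosSeries f t ^ n * cos (↑(x - l) * t)))
        (∫ t in -π..π, cosSeries f t ^ (n + 1) * cos (x * t)) := by
      refine intervalIntegral.hasSum_integral_of_dominated_convergence (fun l _ => f l)
        (fun l => (hcont l).aestronglyMeasurable) (fun l => ae_of_all _ fun t _ => ?_)
        (ae_of_all _ fun t _ => hf.summable) (by simp) (ae_of_all _ fun t _ => ?_)
      · rw [norm_mul, Real.norm_of_nonneg (hf0 l)]
        refine mul_le_of_le_one_right (hf0 l) ?_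
        rw [norm_mul, norm_pow, Real.norm_eq_abs, Real.norm_eq_abs]
        exact mul_le_one₀ (pow_le_one₀ (abs_nonneg _) (abs_cosSeries_le_one hf0 hf t))
          (abs_nonneg _) (abs_cos_le_one _)
      · have h := (hasSum_mul_cos_sub hf.summable hsymm x t).mul_left (cosSeries f t ^ n)
        rw [← mul_assoc, ← pow_succ] at h
        exact h.congr_fun fun l => by push_cast; ring
    refine (hasSum_convPow_succ hf0 hf n x).unique ((hint.mul_left (2 * π)⁻¹).congr_fun fun l => ?_)
    rw [ih, intervalIntegral.integral_const_mul]
    ring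

lemma ofReal_convPow_le (hf0 : ∀ l, 0 ≤ f l) (hf : HasSum f 1) (hsymm : ∀ l, f (-l) = f l)
    (n : ℕ) (x : ℤ) :
    ENNReal.ofReal (convPow f n x) ≤
      ENNReal.ofReal (2 * π)⁻¹ * ∫⁻ t in Ioc (-π) π, ‖cosSeries f t‖ₑ ^ n := by
  rw [convPow_eq_integral hf0 hf hsymm, intervalIntegral.integral_of_le (by linarith [pi_pos]),
    ENNReal.ofReal_mul (by positivity)]
  gcongr
  refine (Real.ofReal_le_enorm _).trans ((enorm_integral_le_lintegral_enorm _).trans ?_)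
  gcongr with t
  rw [enorm_mul, enorm_pow]
  exact mul_le_of_le_one_right' (by simpa [Real.enorm_eq_ofReal_abs] using abs_cos_le_one _)

lemma tsum_ofReal_convPow_le (hf0 : ∀ l, 0 ≤ f l) (hf : HasSum f 1) (hsymm : ∀ l, f (-l) = f l)
    (x : ℤ) :
    ∑' n, ENNReal.ofReal (convPow f n x) ≤
      ENNReal.ofReal (2 * π)⁻¹ * ∫⁻ t in Ioc (-π) π, (1 - ‖cosSeries f t‖ₑ)⁻¹ := by
  have hmeas : Measurable fun t => ‖cosSeries f t‖ₑ :=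
    (continuous_cosSeries hf.summable).measurable.enorm
  calc ∑' n, ENNReal.ofReal (convPow f n x)
      ≤ ∑' n, ENNReal.ofReal (2 * π)⁻¹ * ∫⁻ t in Ioc (-π) π, ‖cosSeries f t‖ₑ ^ n :=
        ENNReal.tsum_le_tsum (ofReal_convPow_le hf0 hf hsymm · x)
    _ = ENNReal.ofReal (2 * π)⁻¹ * ∫⁻ t in Ioc (-π) π, (1 - ‖cosSeries f t‖ₑ)⁻¹ := by
        rw [ENNReal.tsum_mul_left, ← lintegral_tsum fun n => (hmeas.pow_const n).aemeasurable]
        simp_rw [ENNReal.tsum_geometric]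

end ConvPow

section RandomWalk

variable {Ω : Type*} [MeasurableSpace Ω] {P : Measure Ω} {Y : ℕ → Ω → ℤ} {f : ℤ → ℝ}

def IsRandomWalk (P : Measure Ω) (Y : ℕ → Ω → ℤ) (f : ℤ → ℝ) : Prop :=
  ∀ (n : ℕ) (y : ℕ → ℤ), P {ω | ∀ i ≤ n, Y i ω = y i} =
    ENNReal.ofReal (if y 0 = 0 then ∏ i ∈ Finset.range n, f (y (i + 1) - y i) else 0)

namespace IsRandomWalk

lemma ae_start_eq_zero (hY : IsRandomWalk P Y f) : ∀ᵐ ω ∂P, Y 0 ω = 0 := by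
  have hsub : {ω | ¬Y 0 ω = 0} ⊆ ⋃ (z : ℤ) (_ : z ≠ 0), {ω | ∀ i ≤ 0, Y i ω = z} := by
    intro ω hω
    simpa using hω
  refine measure_mono_null hsub (measure_iUnion_null fun z => measure_iUnion_null fun hz => ?_)
  simpa [hz] using hY 0 fun _ => z

lemma measure_prefix_succ (hY : IsRandomWalk P Y f) (hf0 : ∀ l, 0 ≤ f l) (k : ℕ) (y : ℕ → ℤ) :
    P {ω | ∀ i ≤ k + 1, Y i ω = y i} =
      P {ω | ∀ i ≤ k, Y i ω = y i} * ENNReal.ofReal (f (y (k + 1) - y k)) := by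
  rw [hY, hY, Finset.prod_range_succ, ← ENNReal.ofReal_mul
    (by split_ifs; exacts [Finset.prod_nonneg fun i _ => hf0 _, le_rfl])]
  split_ifs <;> simp

lemma measure_prefix_and_eq_le (hY : IsRandomWalk P Y f) (hf0 : ∀ l, 0 ≤ f l) (hf : HasSum f 1)
    (m k : ℕ) (y : ℕ → ℤ) (x : ℤ) :
    P {ω | (∀ i ≤ k, Y i ω = y i) ∧ Y (k + m) ω = x} ≤
      P {ω | ∀ i ≤ k, Y i ω = y i} * ENNReal.ofReal (convPow f m (x - y k)) := by
  induction m generalizing k y with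
  | zero =>
    by_cases hx : x = y k
    · simpa [convPow, hx] using measure_mono fun ω hω => hω.1
    · have hempty : {ω | (∀ i ≤ k, Y i ω = y i) ∧ Y (k + 0) ω = x} = ∅ :=
        Set.eq_empty_of_forall_notMem fun ω hω => hx (hω.2 ▸ hω.1 k le_rfl)
      simp only [hempty, measure_empty, zero_le]
  | succ m ih =>
    -- split on the next step `l = Y (k + 1) - y k`, extending the prefix by `y k + l`
    set y' : ℤ → ℕ → ℤ := fun l => Function.update y (k + 1) (y k + l)
    have hprefix (l : ℤ) : {ω | ∀ i ≤ k, Y i ω = y' l i} = {ω | ∀ i ≤ k, Y i ω = y i} := by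
      ext ω
      exact forall₂_congr fun i hi => by simp only [y', Function.update_of_ne (by omega : i ≠ k + 1)]
    have hcover : {ω | (∀ i ≤ k, Y i ω = y i) ∧ Y (k + (m + 1)) ω = x} ⊆
        ⋃ l, {ω | (∀ i ≤ k + 1, Y i ω = y' l i) ∧ Y (k + 1 + m) ω = x} := by
      rintro ω ⟨hpre, hx⟩
      refine mem_iUnion.2 ⟨Y (k + 1) ω - y k, fun i hi => ?_, by rwa [Nat.add_right_comm]⟩
      rcases Nat.le_succ_iff.1 hi with hi | rfl
      · simp [y', Function.update_of_ne (by omega : i ≠ k + 1), hpre i hi]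
      · simp [y']
    have hstep (l : ℤ) :
        P {ω | (∀ i ≤ k + 1, Y i ω = y' l i) ∧ Y (k + 1 + m) ω = x} ≤
          P {ω | ∀ i ≤ k, Y i ω = y i} *
            (ENNReal.ofReal (f l) * ENNReal.ofReal (convPow f m (x - y k - l))) := by
      refine (ih (k + 1) (y' l)).trans (le_of_eq ?_)
      rw [hY.measure_prefix_succ hf0, hprefix, mul_assoc]
      simp [y', sub_sub]
    calc P {ω | (∀ i ≤ k, Y i ω = y i) ∧ Y (k + (m + 1)) ω = x}
        ≤ ∑' l, P {ω | (∀ i ≤ k + 1, Y i ω = y' l i) ∧ Y (k + 1 + m) ω = x} :=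
          (measure_mono hcover).trans (measure_iUnion_le _)
      _ ≤ ∑' l, P {ω | ∀ i ≤ k, Y i ω = y i} *
            (ENNReal.ofReal (f l) * ENNReal.ofReal (convPow f m (x - y k - l))) :=
          ENNReal.tsum_le_tsum hstep
      _ = P {ω | ∀ i ≤ k, Y i ω = y i} * ENNReal.ofReal (convPow f (m + 1) (x - y k)) := by
          have hQ := hasSum_convPow_succ hf0 hf m (x - y k)
          rw [ENNReal.tsum_mul_left, ← hQ.tsum_eq, ENNReal.ofReal_tsum_of_nonneg
            (fun l => mul_nonneg (hf0 l) (convPow_mem_Icc hf0 hf m _).1) hQ.summable]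
          simp_rw [ENNReal.ofReal_mul (hf0 _)]

lemma measure_eq_le_convPow (hY : IsRandomWalk P Y f) (hf0 : ∀ l, 0 ≤ f l) (hf : HasSum f 1)
    (n : ℕ) (x : ℤ) : P {ω | Y n ω = x} ≤ ENNReal.ofReal (convPow f n x) := by
  have hstart : P {ω | Y 0 ω = 0} = 1 := by simpa using hY 0 0
  calc P {ω | Y n ω = x} ≤ P {ω | (∀ i ≤ 0, Y i ω = (0 : ℕ → ℤ) i) ∧ Y (0 + n) ω = x} := by
        refine measure_mono_ae ?_
        filter_upwards [hY.ae_start_eq_zero] with ω h0 hx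
        exact ⟨fun i hi => by simpa [Nat.le_zero.1 hi] using h0, by rwa [zero_add]⟩
    _ ≤ ENNReal.ofReal (convPow f n x) := by
        simpa [hstart] using hY.measure_prefix_and_eq_le hf0 hf n 0 0 x

end IsRandomWalk

lemma tendsto_abs_cofinite_atTop : Tendsto (fun x : ℤ => |x|) cofinite atTop := by
  rw [Int.cofinite_eq]
  exact tendsto_abs_atBot_atTop.sup tendsto_abs_atTop_atTop

lemma ae_tendsto_abs_atTop_of_tsum_ne_top (h : ∀ x : ℤ, ∑' n, P {ω | Y n ω = x} ≠ ∞) :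
    ∀ᵐ ω ∂P, Tendsto (fun n => |Y n ω|) atTop atTop := by
  filter_upwards [ae_all_iff.2 fun x => ae_eventually_notMem (h x)] with ω hω
  exact tendsto_abs_cofinite_atTop.comp (le_cofinite_iff_eventually_ne.2 hω)

theorem IsRandomWalk.ae_tendsto_abs_atTop (hY : IsRandomWalk P Y f) (hf0 : ∀ l, 0 ≤ f l)
    (hf : HasSum f 1) (hsymm : ∀ l, f (-l) = f l)
    (hint : ∫⁻ t in Ioc (-π) π, (1 - ‖cosSeries f t‖ₑ)⁻¹ ≠ ∞) :
    ∀ᵐ ω ∂P, Tendsto (fun n => |Y n ω|) atTop atTop :=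
  ae_tendsto_abs_atTop_of_tsum_ne_top fun x =>
    ne_top_of_le_ne_top (ENNReal.mul_ne_top ENNReal.ofReal_ne_top hint)
      ((ENNReal.tsum_le_tsum (hY.measure_eq_le_convPow hf0 hf · x)).trans
        (tsum_ofReal_convPow_le hf0 hf hsymm x))

end RandomWalk

section HeavyTail

variable {f : ℤ → ℝ} {c β : ℝ}

lemma le_card_Icc_ceil_floor_three_mul {a : ℝ} (ha : 1 / 2 ≤ a) :
    a ≤ (Finset.Icc ⌈a⌉ ⌊3 * a⌋).card := by
  have hfloor := Int.lt_floor_add_one (3 * a)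
  have hceil := Int.ceil_lt_add_one a
  have hpos : (0 : ℝ) < ⌊3 * a⌋ + 1 - ⌈a⌉ := by linarith
  have hone : (1 : ℝ) ≤ ⌊3 * a⌋ + 1 - ⌈a⌉ := by
    have : (0 : ℤ) < ⌊3 * a⌋ + 1 - ⌈a⌉ := by exact_mod_cast hpos
    exact_mod_cast this
  rw [Int.card_Icc, ← Int.cast_natCast, Int.toNat_of_nonneg (by exact_mod_cast hpos.le)]
  push_cast
  rcases le_total a 1 with h | h <;> linarith

lemma le_one_sub_cosSeries (hf0 : ∀ l, 0 ≤ f l) (hf : HasSum f 1) (hc : 0 ≤ c) (hβ : 0 ≤ β)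
    (htail : ∀ l : ℤ, 0 < l → c * (l : ℝ) ^ (-β) ≤ f l) {t : ℝ} (ht : 0 < t) (htπ : t ≤ π) :
    c * 3 ^ (-β) * (π / 2) ^ (1 - β) * t ^ (β - 1) ≤ 1 - cosSeries f t := by
  -- every integer `l ∈ [a, 3a]` has `l t ∈ [π/2, 3π/2]`, and there are at least `a` of them
  set a := π / 2 / t with ha
  have hat : a * t = π / 2 := by rw [ha]; field_simp
  have ha_half : 1 / 2 ≤ a := by rw [ha, le_div_iff₀ ht]; linarith
  have ha_pos : 0 < a := by linarith
  have hterm : ∀ l ∈ Finset.Icc ⌈a⌉ ⌊3 * a⌋, c * (3 * a) ^ (-β) ≤ f l * (1 - cos (l * t)) := by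
    intro l hl
    rw [Finset.mem_Icc, Int.ceil_le, Int.le_floor] at hl
    have hl0 : (0 : ℝ) < l := by linarith
    have hcos : cos (l * t) ≤ 0 := by
      apply cos_nonpos_of_pi_div_two_le_of_le <;> nlinarith
    calc c * (3 * a) ^ (-β) ≤ c * (l : ℝ) ^ (-β) :=
          mul_le_mul_of_nonneg_left (rpow_le_rpow_of_nonpos hl0 hl.2 (by linarith)) hc
      _ ≤ f l := htail l (by exact_mod_cast hl0)
      _ ≤ f l * (1 - cos (l * t)) := le_mul_of_one_le_right (hf0 l) (by linarith)
  calc c * 3 ^ (-β) * (π / 2) ^ (1 - β) * t ^ (β - 1) = a * (c * (3 * a) ^ (-β)) := by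
        rw [mul_rpow (by norm_num) ha_pos.le, ha, div_rpow (by positivity) ht.le,
          rpow_sub (by positivity), rpow_sub_one ht.ne', rpow_one, rpow_neg (by positivity),
          rpow_neg (by positivity)]
        field_simp
        rw [mul_assoc, ← rpow_add ht]
        simp
    _ ≤ (Finset.Icc ⌈a⌉ ⌊3 * a⌋).card * (c * (3 * a) ^ (-β)) := by
        gcongr
        exact le_card_Icc_ceil_floor_three_mul ha_half
    _ ≤ ∑ l ∈ Finset.Icc ⌈a⌉ ⌊3 * a⌋, f l * (1 - cos (l * t)) := by
        rw [← nsmul_eq_mul]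
        exact Finset.card_nsmul_le_sum _ _ _ hterm
    _ ≤ 1 - cosSeries f t :=
        sum_le_hasSum _ (fun l _ => mul_nonneg (hf0 l) (by linarith [cos_le_one (l * t)]))
          (hasSum_mul_one_sub_cos hf t)

lemma le_one_add_cosSeries (hf0 : ∀ l, 0 ≤ f l) (hf : HasSum f 1) (hc : 0 ≤ c) (hβ : 0 ≤ β)
    (htail : ∀ l : ℤ, 0 < l → c * (l : ℝ) ^ (-β) ≤ f l) (t : ℝ) :
    7 / 8 * (c * 2 ^ (-β)) ≤ 1 + cosSeries f t := by
  have hm : 0 ≤ c * 2 ^ (-β) := by positivity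
  have h1 : c * 2 ^ (-β) ≤ f 1 := by
    refine (mul_le_of_le_one_right hc (rpow_le_one_of_one_le_of_nonpos one_le_two ?_)).trans ?_
    · linarith
    · simpa using htail 1 one_pos
  have h2 : c * 2 ^ (-β) ≤ f 2 := by simpa using htail 2 two_pos
  have hsum := sum_le_hasSum {1, 2}
    (fun l _ => mul_nonneg (hf0 l) (by linarith [neg_one_le_cos (l * t)]))
    (hasSum_mul_one_add_cos hf t)
  rw [Finset.sum_pair (by norm_num)] at hsum
  simp only [Int.cast_one, one_mul, Int.cast_ofNat] at hsum
  have hc1 : 0 ≤ 1 + cos t := by linarith [neg_one_le_cos t]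
  have hc2 : 0 ≤ 1 + cos (2 * t) := by linarith [neg_one_le_cos (2 * t)]
  -- `(1 + cos t) + (1 + cos 2t) = 2 (cos t + 1/4)² + 7/8`
  have hcos : 7 / 8 ≤ (1 + cos t) + (1 + cos (2 * t)) := by
    nlinarith [cos_two_mul t, sq_nonneg (cos t + 1 / 4)]
  nlinarith [mul_le_mul_of_nonneg_right h1 hc1, mul_le_mul_of_nonneg_right h2 hc2,
    mul_le_mul_of_nonneg_left hcos hm]

lemma min_le_one_sub_abs_cosSeries (hf0 : ∀ l, 0 ≤ f l) (hf : HasSum f 1) (hc : 0 ≤ c)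
    (hβ : 0 ≤ β) (htail : ∀ l : ℤ, 0 < l → c * (l : ℝ) ^ (-β) ≤ f l) {t : ℝ} (ht : t ≠ 0)
    (htπ : |t| ≤ π) :
    min (c * 3 ^ (-β) * (π / 2) ^ (1 - β) * |t| ^ (β - 1)) (7 / 8 * (c * 2 ^ (-β))) ≤
      1 - |cosSeries f t| := by
  have hminus : c * 3 ^ (-β) * (π / 2) ^ (1 - β) * |t| ^ (β - 1) ≤ 1 - cosSeries f t := by
    rcases ht.lt_or_gt with h | h
    · rw [← cosSeries_neg, abs_of_neg h]
      exact le_one_sub_cosSeries hf0 hf hc hβ htail (neg_pos.2 h) (by rwa [abs_of_neg h] at htπ)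
    · rw [abs_of_pos h]
      exact le_one_sub_cosSeries hf0 hf hc hβ htail h (by rwa [abs_of_pos h] at htπ)
  have hplus := le_one_add_cosSeries hf0 hf hc hβ htail t
  rcases abs_cases (cosSeries f t) with ⟨h, _⟩ | ⟨h, _⟩ <;> rw [h]
  · exact min_le_of_left_le hminus
  · exact min_le_of_right_le (by linarith)

lemma intervalIntegrable_abs_rpow {r : ℝ} (hr : -1 < r) (a b : ℝ) :
    IntervalIntegrable (fun t => |t| ^ r) volume a b :=
  intervalIntegrable_of_even (fun t => by rw [abs_neg]) fun x hx =>
    (intervalIntegral.intervalIntegrable_rpow' hr).congr fun t ht => by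
      rw [uIoc_of_le hx.le] at ht
      simp [abs_of_pos ht.1]

lemma lintegral_inv_one_sub_enorm_cosSeries_ne_top (hf0 : ∀ l, 0 ≤ f l) (hf : HasSum f 1)
    (hc : 0 < c) (hβ : 0 ≤ β) (hβ₂ : β < 2)
    (htail : ∀ l : ℤ, 0 < l → c * (l : ℝ) ^ (-β) ≤ f l) :
    ∫⁻ t in Ioc (-π) π, (1 - ‖cosSeries f t‖ₑ)⁻¹ ≠ ∞ := by
  set K := c * 3 ^ (-β) * (π / 2) ^ (1 - β)
  set B := 7 / 8 * (c * 2 ^ (-β))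
  have hB : 0 < B := by positivity
  have hbound : ∀ t ∈ Ioc (-π) π, t ≠ 0 →
      (1 - ‖cosSeries f t‖ₑ)⁻¹ ≤ ENNReal.ofReal (K⁻¹ * |t| ^ (1 - β) + B⁻¹) := by
    intro t ht ht0
    have hmin : min (K * |t| ^ (β - 1)) B ≤ 1 - |cosSeries f t| :=
      min_le_one_sub_abs_cosSeries hf0 hf hc.le hβ htail ht0 (abs_le.2 ⟨ht.1.le, ht.2⟩)
    have hKt : 0 < K * |t| ^ (β - 1) := by positivity
    rw [Real.enorm_eq_ofReal_abs, ← ENNReal.ofReal_one, ← ENNReal.ofReal_sub _ (abs_nonneg _),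
      ← ENNReal.ofReal_inv_of_pos ((lt_min hKt hB).trans_le hmin)]
    refine ENNReal.ofReal_le_ofReal ((inv_anti₀ (lt_min hKt hB) hmin).trans ?_)
    have hinv : (K * |t| ^ (β - 1))⁻¹ = K⁻¹ * |t| ^ (1 - β) := by
      rw [mul_inv, ← rpow_neg (abs_nonneg _), neg_sub]
    rcases min_cases (K * |t| ^ (β - 1)) B with ⟨h, _⟩ | ⟨h, _⟩ <;> rw [h]
    · linarith [inv_pos.2 hB]
    · linarith [inv_pos.2 hKt]
  have hint : IntegrableOn (fun t => K⁻¹ * |t| ^ (1 - β) + B⁻¹) (Ioc (-π) π) := by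
    rw [← intervalIntegrable_iff_integrableOn_Ioc_of_le (by linarith [pi_pos])]
    exact ((intervalIntegrable_abs_rpow (by linarith) _ _).const_mul _).add
      intervalIntegrable_const
  refine ne_top_of_le_ne_top hint.lintegral_lt_top.ne (lintegral_mono_ae ?_)
  filter_upwards [ae_restrict_mem measurableSet_Ioc, ae_restrict_of_ae (Measure.ae_ne volume 0)]
    with t ht ht0
  exact hbound t ht ht0

theorem IsRandomWalk.ae_tendsto_abs_atTop_of_tail {Ω : Type*} [MeasurableSpace Ω]
    {P : Measure Ω} {Y : ℕ → Ω → ℤ} (hY : IsRandomWalk P Y f) (hf0 : ∀ l, 0 ≤ f l)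
    (hf : HasSum f 1) (hsymm : ∀ l, f (-l) = f l) (hc : 0 < c) (hβ : 0 ≤ β) (hβ₂ : β < 2)
    (htail : ∀ l : ℤ, 0 < l → c * (l : ℝ) ^ (-β) ≤ f l) :
    ∀ᵐ ω ∂P, Tendsto (fun n => |Y n ω|) atTop atTop :=
  hY.ae_tendsto_abs_atTop hf0 hf hsymm
    (lintegral_inv_one_sub_enorm_cosSeries_ne_top hf0 hf hc hβ hβ₂ htail)

end HeavyTail

section CauchyWalk

variable {β : ℝ}

lemma hasSum_zeta (hβ : 1 < β) : HasSum (fun n : ℕ => ((n : ℝ) + 1) ^ (-β)) (zeta β) := by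
  refine Summable.hasSum ?_
  simpa using (summable_nat_add_iff 1).2 (Real.summable_nat_rpow.2 (by linarith : -β < -1))

lemma zeta_pos (hβ : 1 < β) : 0 < zeta β :=
  (hasSum_zeta hβ).tsum_eq ▸ (hasSum_zeta hβ).summable.tsum_pos (fun n => by positivity) 0
    (by positivity)

lemma q_nonneg (hβ : 1 < β) (l : ℤ) : 0 ≤ q β l := by
  have := zeta_pos hβ
  unfold q
  split_ifs <;> positivity

lemma q_neg (β : ℝ) (l : ℤ) : q β (-l) = q β l := by
  simp [q]

lemma q_of_pos (β : ℝ) {l : ℤ} (hl : 0 < l) : q β l = (2 * zeta β)⁻¹ * (l : ℝ) ^ (-β) := by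
  rw [q, if_neg hl.ne', abs_of_pos (by exact_mod_cast hl)]

lemma hasSum_q (hβ : 1 < β) : HasSum (q β) 1 := by
  have hpos : HasSum (fun n : ℕ => q β (n + 1)) (1 / 2) := by
    have := (hasSum_zeta hβ).mul_left (2 * zeta β)⁻¹
    rw [show (2 * zeta β)⁻¹ * zeta β = 1 / 2 by field_simp [(zeta_pos hβ).ne']] at this
    refine this.congr_fun fun n => ?_
    rw [q_of_pos β (by positivity)]
    push_cast
    rfl
  have hnat : HasSum (fun n : ℕ => q β n) (1 / 2) := by
    rw [← hasSum_nat_add_iff' 1]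
    simpa [q] using hpos
  simpa [one_div, ← two_mul] using
    hnat.of_nat_of_neg_add_one (hpos.congr_fun fun n => q_neg β _)

end CauchyWalk

theorem random_walk_transient_general (β : ℝ) (hβ₁ : 1 < β) (hβ₂ : β < 2)
    {Ω : Type*} [MeasurableSpace Ω] (P : Measure Ω)
    (Y : ℕ → Ω → ℤ)
    (hlaw : ∀ (n : ℕ) (y : ℕ → ℤ),
      P {ω | ∀ i ≤ n, Y i ω = y i} =
        ENNReal.ofReal
          (if y 0 = 0 then ∏ i ∈ Finset.range n, q β (y (i + 1) - y i) else 0)) :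
    ∀ᵐ ω ∂P, Tendsto (fun n => |Y n ω|) atTop atTop :=
  IsRandomWalk.ae_tendsto_abs_atTop_of_tail hlaw (q_nonneg hβ₁) (hasSum_q hβ₁) (q_neg β)
    (inv_pos.2 (mul_pos two_pos (zeta_pos hβ₁))) (by linarith) hβ₂ fun _ hl => (q_of_pos β hl).ge

/-- for every `1 < β < 2`, the random walk `(Y_n^β)` on `ℤ` started at `0`
with i.i.d. increments of law `P(increment = l) = (2ζ(β))⁻¹ |l|^(-β)` (`l ≠ 0`) is
transient: almost surely `|Y_n^β| → ∞`. -/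
theorem random_walk_transient (β : ℝ) (hβ₁ : 1 < β) (hβ₂ : β < 2)
    {Ω : Type*} [MeasurableSpace Ω] (P : Measure Ω) [IsProbabilityMeasure P]
    (Y : ℕ → Ω → ℤ) (hY : ∀ n, Measurable (Y n))
    (hlaw : ∀ (n : ℕ) (y : ℕ → ℤ),
      P {ω | ∀ i ≤ n, Y i ω = y i} =
        ENNReal.ofReal
          (if y 0 = 0 then ∏ i ∈ Finset.range n, q β (y (i + 1) - y i) else 0)) :
    ∀ᵐ ω ∂P, Tendsto (fun n => |Y n ω|) atTop atTop :=
  random_walk_transient_general β hβ₁ hβ₂ P Y hlaw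

end SchmelingStratmann
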